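/- arXiv:2103.11625 — 4 statements merged into one kernel-verified Lean document; each statement's English description precedes it below -/
import Mathlib

section
/- Online bound via monotonicity and submodularity: for a normalized, monotone, submodular f : Finset U → ℝ on ground set U partitioned into blocks B_1,...,B_n, any feasible solution X (at most one element per block), and any optimal feasible solution X*, we have f(X*) ≤ f(X) + Σ_{r=1}^n max_{x ∈ B_r} (f(X ∪ {x}) − f(X)). -/
open Finset

lemma marginal_sum_bound {U : Type*} [DecidableEq U]
    (f : Finset U → ℝ)
    (hmono : ∀ A B' : Finset U, A ⊆ B' → f A ≤ f B')
    (hsub : ∀ (A B' : Finset U) (x : U), A ⊆ B' → x ∉ B' →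
      f (insert x B') - f B' ≤ f (insert x A) - f A)
    (X : Finset U) (S : Finset U) :
    f (X ∪ S) ≤ f X + ∑ x ∈ S, (f (insert x X) - f X) := by
  classical
  induction S using Finset.induction_on with
  | empty => simp
  | @insert a S ha ih =>
    rw [Finset.sum_insert ha]
    by_cases h : a ∈ X ∪ S
    · have h1 : X ∪ insert a S = X ∪ S := by
        rw [Finset.union_insert, Finset.insert_eq_self.mpr h]
      have h2 : 0 ≤ f (insert a X) - f X := by
        have := hmono X (insert a X) (Finset.subset_insert _ _)
        linarith
      rw [h1]; linarith
    · have h1 : X ∪ insert a S = insert a (X ∪ S) := by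
        rw [Finset.union_insert]
      have h2 := hsub X (X ∪ S) a Finset.subset_union_left h
      rw [h1]; linarith

/-- Online bound: for a normalized, monotone, submodular `f` over a simple
partition matroid, any feasible `X` and any feasible `X⋆` satisfy
`f(X⋆) ≤ f(X) + ∑_r max_{x ∈ B_r} (f(X ∪ {x}) − f(X))`. -/
theorem online_bound {U : Type*} [Fintype U] [DecidableEq U] {n : ℕ}
    (B : Fin n → Finset U)
    (hne : ∀ r, (B r).Nonempty)
    (hdisj : ∀ r s, r ≠ s → Disjoint (B r) (B s))
    (hcover : ∀ u : U, ∃ r, u ∈ B r)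
    (f : Finset U → ℝ) (hnorm : f ∅ = 0)
    (hmono : ∀ A B' : Finset U, A ⊆ B' → f A ≤ f B')
    (hsub : ∀ (A B' : Finset U) (x : U), A ⊆ B' → x ∉ B' →
      f (insert x B') - f B' ≤ f (insert x A) - f A)
    (X Xstar : Finset U)
    (hX : ∀ r, (X ∩ B r).card ≤ 1)
    (hXstar : ∀ r, (Xstar ∩ B r).card ≤ 1) :
    f Xstar ≤ f X + ∑ r, (B r).sup' (hne r) (fun x => f (insert x X) - f X) := by
  classical
  set g : U → ℝ := fun x => f (insert x X) - f X with hg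
  have hgnn : ∀ x, 0 ≤ g x := fun x => by
    have := hmono X (insert x X) (Finset.subset_insert _ _); simp [hg]; linarith
  -- choose block for each element
  choose ρ hρ using hcover
  have step1 : f Xstar ≤ f X + ∑ x ∈ Xstar, g x := by
    have h1 : f Xstar ≤ f (X ∪ Xstar) := hmono _ _ Finset.subset_union_right
    have h2 := marginal_sum_bound f hmono hsub X Xstar
    linarith
  have step2 : ∑ x ∈ Xstar, g x ≤ ∑ r, (B r).sup' (hne r) g := by
    rw [← Finset.sum_fiberwise_of_maps_to (g := ρ) (t := Finset.univ)
      (fun x _ => Finset.mem_univ _) g]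
    apply Finset.sum_le_sum
    intro r _
    have hsubset : Xstar.filter (fun x => ρ x = r) ⊆ Xstar ∩ B r := by
      intro x hx
      rw [Finset.mem_filter] at hx
      exact Finset.mem_inter.mpr ⟨hx.1, hx.2 ▸ hρ x⟩
    have hcard : (Xstar.filter (fun x => ρ x = r)).card ≤ 1 :=
      le_trans (Finset.card_le_card hsubset) (hXstar r)
    rcases Finset.eq_empty_or_nonempty (Xstar.filter (fun x => ρ x = r)) with he | ⟨x, hx⟩
    · rw [he, Finset.sum_empty]
      obtain ⟨y, hy⟩ := hne r
      exact le_trans (hgnn y) (Finset.le_sup' g hy)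
    · have hxB : x ∈ B r := (Finset.mem_inter.mp (hsubset hx)).2
      have : Xstar.filter (fun x => ρ x = r) = {x} := by
        apply Finset.Subset.antisymm _ (Finset.singleton_subset_iff.mpr hx)
        intro y hy
        simp only [Finset.mem_singleton]
        exact Finset.card_le_one.mp hcard y hy x hx
      rw [this, Finset.sum_singleton]
      exact Finset.le_sup' g hxB
  linarith
end

section
/- Sequential greedy assignment over a simple partition matroid achieves at least half of optimal: if robots sequentially select x_r ∈ argmax_{x ∈ B_r} f(X_{1:r−1} ∪ {x}) for r = 1,...,n, where f is normalized, monotone, and submodular, then f({x_1,...,x_n}) ≥ (1/2) f(X*) for any feasible X* with at most one element per block. -/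
open Finset

/-- Submodular marginal-sum bound: `f (S ∪ B) ≤ f B + ∑_{u ∈ S \ B} (f (insert u B) - f B)`. -/
lemma submod_union_bound {U : Type*} [DecidableEq U] (f : Finset U → ℝ)
    (hsub : ∀ (A B' : Finset U) (x : U), A ⊆ B' → x ∉ B' →
      f (insert x B') - f B' ≤ f (insert x A) - f A) :
    ∀ (S C : Finset U), f (S ∪ C) ≤ f C + ∑ u ∈ S \ C, (f (insert u C) - f C) := by
  intro S
  induction S using Finset.induction_on with
  | empty => intro C; simp
  | @insert a S ha IH =>
    intro C
    by_cases haC : a ∈ C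
    · rw [Finset.insert_sdiff_of_mem _ haC]
      have : insert a S ∪ C = S ∪ C := by
        rw [Finset.insert_union, Finset.insert_eq_self.mpr (Finset.mem_union_right _ haC)]
      rw [this]; exact IH C
    · have haSC : a ∉ S ∪ C := by simp [ha, haC]
      have h1 : f (insert a (S ∪ C)) - f (S ∪ C) ≤ f (insert a C) - f C :=
        hsub C (S ∪ C) a Finset.subset_union_right haSC
      have h2 : insert a S \ C = insert a (S \ C) := Finset.insert_sdiff_of_notMem _ haC
      have h3 : a ∉ S \ C := fun h => ha (Finset.mem_sdiff.mp h).1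
      rw [Finset.insert_union, h2, Finset.sum_insert h3]
      have := IH C
      linarith

/-- Sequential greedy assignment over a simple partition matroid achieves at
least half of the optimal value: if for each block in sequence robot `r` picks
`x r ∈ B r` maximizing the marginal gain conditioned on the previous choices,
then `f({x_1,...,x_n}) ≥ (1/2) f(X⋆)` for every feasible `X⋆`. -/
theorem sequential_greedy_half_optimal {U : Type*} [Fintype U] [DecidableEq U] {n : ℕ}
    (B : Fin n → Finset U)
    (hne : ∀ r, (B r).Nonempty)
    (hdisj : ∀ r s, r ≠ s → Disjoint (B r) (B s))
    (hcover : ∀ u : U, ∃ r, u ∈ B r)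
    (f : Finset U → ℝ) (hnorm : f ∅ = 0)
    (hmono : ∀ A B' : Finset U, A ⊆ B' → f A ≤ f B')
    (hsub : ∀ (A B' : Finset U) (x : U), A ⊆ B' → x ∉ B' →
      f (insert x B') - f B' ≤ f (insert x A) - f A)
    (x : Fin n → U) (hx : ∀ r, x r ∈ B r)
    (hgreedy : ∀ r : Fin n, ∀ y ∈ B r,
      f (insert y ((Finset.univ.filter (fun s => s < r)).image x)) ≤
        f (insert (x r) ((Finset.univ.filter (fun s => s < r)).image x)))
    (Xstar : Finset U) (hXstar : ∀ r, (Xstar ∩ B r).card ≤ 1) :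
    (1 / 2 : ℝ) * f Xstar ≤ f (Finset.univ.image x) := by
  classical
  set g : ℕ → Finset U := fun k => (Finset.univ.filter (fun s : Fin n => (s : ℕ) < k)).image x
    with hg
  have hgFin : ∀ r : Fin n, (Finset.univ.filter (fun s => s < r)).image x = g (r : ℕ) := by
    intro r
    rfl
  have hg0 : g 0 = ∅ := by simp [hg]
  have hgn : g n = Finset.univ.image x := by
    simp only [hg]
    congr 1
    rw [Finset.filter_true_of_mem]
    intro s _
    exact s.isLt
  have hstep : ∀ (k : ℕ) (hk : k < n), g (k + 1) = insert (x ⟨k, hk⟩) (g k) := by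
    intro k hk
    simp only [hg]
    rw [← Finset.image_insert]
    congr 1
    ext s
    simp only [Finset.mem_filter, Finset.mem_univ, true_and, Finset.mem_insert, Fin.ext_iff]
    omega
  have hgsub : ∀ k m : ℕ, k ≤ m → g k ⊆ g m := by
    intro k m hkm
    apply Finset.image_subset_image
    intro s hs
    simp only [Finset.mem_filter, Finset.mem_univ, true_and] at *
    omega
  have htel : f (g n) = ∑ k ∈ Finset.range n, (f (g (k + 1)) - f (g k)) := by
    rw [Finset.sum_range_sub (fun k => f (g k)), hg0, hnorm, sub_zero]
  -- choose block of each element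
  let ru : U → Fin n := fun u => Classical.choose (hcover u)
  have hru : ∀ u, u ∈ B (ru u) := fun u => Classical.choose_spec (hcover u)
  -- bound each optimal element's marginal by the greedy gain in its block
  have hbound : ∀ u ∈ Xstar \ g n,
      f (insert u (g n)) - f (g n) ≤ f (g ((ru u : ℕ) + 1)) - f (g (ru u : ℕ)) := by
    intro u hu
    have hu' : u ∉ g n := (Finset.mem_sdiff.mp hu).2
    have h1 : f (insert u (g n)) - f (g n) ≤ f (insert u (g (ru u : ℕ))) - f (g (ru u : ℕ)) :=
      hsub _ _ u (hgsub _ _ (le_of_lt (ru u).isLt)) hu'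
    have h2 : f (insert u (g (ru u : ℕ))) ≤ f (insert (x (ru u)) (g (ru u : ℕ))) := by
      have := hgreedy (ru u) u (hru u)
      rwa [hgFin] at this
    have h3 : g ((ru u : ℕ) + 1) = insert (x (ru u)) (g (ru u : ℕ)) := by
      rw [hstep _ (ru u).isLt, Fin.eta]
    rw [h3]
    linarith
  have hδnonneg : ∀ r : Fin n, 0 ≤ f (g ((r : ℕ) + 1)) - f (g (r : ℕ)) := by
    intro r
    have := hmono _ _ (hgsub (r : ℕ) ((r : ℕ) + 1) (Nat.le_succ _))
    linarith
  have hinj : ∀ u1 ∈ Xstar \ g n, ∀ u2 ∈ Xstar \ g n, ru u1 = ru u2 → u1 = u2 := by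
    intro u1 h1 u2 h2 h
    have m1 : u1 ∈ Xstar ∩ B (ru u2) := by
      rw [← h]; exact Finset.mem_inter.mpr ⟨(Finset.mem_sdiff.mp h1).1, hru u1⟩
    have m2 : u2 ∈ Xstar ∩ B (ru u2) :=
      Finset.mem_inter.mpr ⟨(Finset.mem_sdiff.mp h2).1, hru u2⟩
    exact Finset.card_le_one.mp (hXstar (ru u2)) _ m1 _ m2
  have hsum : ∑ u ∈ Xstar \ g n, (f (insert u (g n)) - f (g n)) ≤
      ∑ k ∈ Finset.range n, (f (g (k + 1)) - f (g k)) := by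
    calc ∑ u ∈ Xstar \ g n, (f (insert u (g n)) - f (g n))
        ≤ ∑ u ∈ Xstar \ g n, (f (g ((ru u : ℕ) + 1)) - f (g (ru u : ℕ))) :=
          Finset.sum_le_sum hbound
      _ = ∑ r ∈ (Xstar \ g n).image ru, (f (g ((r : ℕ) + 1)) - f (g (r : ℕ))) :=
          by rw [Finset.sum_image hinj]
      _ ≤ ∑ r : Fin n, (f (g ((r : ℕ) + 1)) - f (g (r : ℕ))) :=
          Finset.sum_le_sum_of_subset_of_nonneg (Finset.subset_univ _)
            (fun r _ _ => hδnonneg r)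
      _ = ∑ k ∈ Finset.range n, (f (g (k + 1)) - f (g k)) :=
          Fin.sum_univ_eq_sum_range (fun k => f (g (k + 1)) - f (g k)) n
  have hunion : f (Xstar ∪ g n) ≤ f (g n) + ∑ u ∈ Xstar \ g n, (f (insert u (g n)) - f (g n)) :=
    submod_union_bound f hsub Xstar (g n)
  have hXle : f Xstar ≤ f (Xstar ∪ g n) := hmono _ _ Finset.subset_union_left
  rw [← hgn]
  rw [← htel] at hsum
  linarith
end

section
/- Noiseless mutual information with independent cells equals expected entropy-weighted coverage: if each cell c_i is an independent Bernoulli random variable, and an observation from action set X deterministically reveals the occupancy values of the cells C(X, E') when the true environment is E', then I(E; Y(X)) = E_{E' ∼ 𝓔}[ Σ_{i ∈ C(X,E')} H(c_i) ], where H(c_i) is the binary entropy of cell i. -/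
open Finset

/-- Shannon entropy of the random variable `Z` on the finite probability space
with mass function `P`. -/
noncomputable def pmfEntropy {Ω V : Type*} [Fintype Ω] [Fintype V] [DecidableEq V]
    (P : Ω → ℝ) (Z : Ω → V) : ℝ :=
  ∑ v, Real.negMulLog (∑ ω ∈ Finset.univ.filter (fun ω => Z ω = v), P ω)

/-- Conditional Shannon entropy `H(id | Z)` on the finite probability space with
mass function `P`: the expectation over the value `v` of `Z` of the entropy of
the conditional distribution given `Z = v`. -/
noncomputable def pmfCondEntropy {Ω V : Type*} [Fintype Ω] [DecidableEq Ω]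
    [Fintype V] [DecidableEq V] (P : Ω → ℝ) (Z : Ω → V) : ℝ :=
  ∑ v, (∑ ω ∈ Finset.univ.filter (fun ω => Z ω = v), P ω) *
    pmfEntropy
      (fun ω => if Z ω = v then
        P ω / (∑ ω' ∈ Finset.univ.filter (fun ω' => Z ω' = v), P ω') else 0)
      id

lemma sumProdAux {m : ℕ} (a : Fin m → Bool → ℝ) :
    ∑ e : Fin m → Bool, ∏ i, a i (e i) = ∏ i, (a i true + a i false) := by
  rw [← Fintype.piFinset_univ, Finset.sum_prod_piFinset]
  exact Finset.prod_congr rfl fun i _ => by rw [Fintype.sum_bool]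

lemma negMulLogProdAux {ι : Type*} [DecidableEq ι] (T : Finset ι) (a : ι → ℝ) :
    Real.negMulLog (∏ i ∈ T, a i)
      = ∑ i ∈ T, (∏ j ∈ T.erase i, a j) * Real.negMulLog (a i) := by
  induction T using Finset.induction_on with
  | empty => simp
  | @insert i T hi ih =>
    rw [Finset.prod_insert hi, Real.negMulLog_mul, Finset.sum_insert hi,
        Finset.erase_insert hi, ih, Finset.mul_sum]
    congr 1
    refine Finset.sum_congr rfl fun j hj => ?_
    have hij : i ≠ j := by rintro rfl; exact hi hj
    rw [Finset.erase_insert_of_ne hij,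
        Finset.prod_insert (fun h => hi (Finset.mem_of_mem_erase h))]
    ring

lemma sumNegMulLogProd {m : ℕ} (a : Fin m → Bool → ℝ)
    (h1 : ∀ i, a i true + a i false = 1) :
    ∑ e : Fin m → Bool, Real.negMulLog (∏ i, a i (e i))
      = ∑ i, (Real.negMulLog (a i true) + Real.negMulLog (a i false)) := by
  have key : ∀ e : Fin m → Bool, Real.negMulLog (∏ i, a i (e i))
      = ∑ i, (∏ j ∈ univ.erase i, a j (e j)) * Real.negMulLog (a i (e i)) :=
    fun e => negMulLogProdAux univ fun i => a i (e i)
  simp_rw [key]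
  rw [Finset.sum_comm]
  refine Finset.sum_congr rfl fun i _ => ?_
  set c : Fin m → Bool → ℝ := fun j x => if j = i then Real.negMulLog (a j x) else a j x with hc
  have he : ∀ e : Fin m → Bool,
      (∏ j ∈ univ.erase i, a j (e j)) * Real.negMulLog (a i (e i)) = ∏ j, c j (e j) := by
    intro e
    rw [← Finset.mul_prod_erase univ (fun j => c j (e j)) (mem_univ i)]
    rw [mul_comm]
    congr 1
    · simp [hc]
    · exact Finset.prod_congr rfl fun j hj => by simp [hc, Finset.ne_of_mem_erase hj]
  simp_rw [he]
  rw [sumProdAux]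
  rw [← Finset.mul_prod_erase univ (fun j => c j true + c j false) (mem_univ i)]
  have h2 : ∏ j ∈ univ.erase i, (c j true + c j false) = 1 := by
    refine Finset.prod_eq_one fun j hj => ?_
    simp [hc, Finset.ne_of_mem_erase hj, h1 j]
  rw [h2, mul_one]
  simp [hc]

lemma pmfEntropy_id {Ω : Type*} [Fintype Ω] [DecidableEq Ω] (P : Ω → ℝ) :
    pmfEntropy P id = ∑ ω, Real.negMulLog (P ω) := by
  unfold pmfEntropy
  refine Finset.sum_congr rfl fun v _ => ?_
  congr 1
  rw [show (univ.filter fun ω => id ω = v) = {v} from by simp [Finset.filter_eq'],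
      Finset.sum_singleton]


set_option maxHeartbeats 2000000 in
/-- Noiseless mutual information with independent cells equals expected
entropy-weighted coverage: with independent Bernoulli cells, deterministic
observed-cell sets `Cov e` (where the observation determines the set of observed
cells), and observations revealing exactly the occupancy of the observed cells,
`I(E; Y) = H(E) − H(E|Y) = E_{E'}[ Σ_{i ∈ Cov E'} H(c_i) ]`. -/
theorem noiseless_mutual_information_eq_expected_coverage {m : ℕ}
    (p : Fin m → ℝ) (hp0 : ∀ i, 0 ≤ p i) (hp1 : ∀ i, p i ≤ 1)
    (P : (Fin m → Bool) → ℝ)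
    (hP : ∀ e, P e = ∏ i, (if e i then p i else 1 - p i))
    (Cov : (Fin m → Bool) → Finset (Fin m))
    (hCons : ∀ e e', (∀ i ∈ Cov e', e i = e' i) → Cov e = Cov e')
    (Y : (Fin m → Bool) → (Fin m → Option Bool))
    (hY : ∀ e i, Y e i = if i ∈ Cov e then some (e i) else none) :
    pmfEntropy P id - pmfCondEntropy P Y =
      ∑ e, P e * ∑ i ∈ Cov e, (Real.negMulLog (p i) + Real.negMulLog (1 - p i)) := by
  classical
  set q : Fin m → Bool → ℝ := fun i x => if x then p i else 1 - p i with hq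
  have hq1 : ∀ i, q i true + q i false = 1 := fun i => by simp [hq]
  have hPq : ∀ e, P e = ∏ i, q i (e i) := fun e => by rw [hP e, hq]
  have hqt : ∀ i, q i true = p i := fun i => by simp [hq]
  have hqf : ∀ i, q i false = 1 - p i := fun i => by simp [hq]
  -- H(E) = ∑ i, h i
  have hH : pmfEntropy P id
      = ∑ i, (Real.negMulLog (p i) + Real.negMulLog (1 - p i)) := by
    rw [pmfEntropy_id]
    simp_rw [hPq]
    rw [sumNegMulLogProd q hq1]
    exact Finset.sum_congr rfl fun i _ => by rw [hqt, hqf]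
  have hsum1 : ∑ e, P e = 1 := by
    simp_rw [hPq]
    rw [sumProdAux]
    exact Finset.prod_eq_one fun i _ => hq1 i
  set Sv : (Fin m → Option Bool) → Finset (Fin m) :=
    fun v => univ.filter fun i => v i ≠ none with hSvdef
  have hSv : ∀ e, Sv (Y e) = Cov e := by
    intro e; ext i
    by_cases hi : i ∈ Cov e <;> simp [hSvdef, hY e i, hi]
  rw [hH]
  unfold pmfCondEntropy
  set w : (Fin m → Option Bool) → ℝ :=
    fun v => ∑ ω ∈ univ.filter fun ω => Y ω = v, P ω with hwdef
  have hsumw : ∑ v, w v = 1 := by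
    simp only [hwdef]
    rw [Finset.sum_fiberwise univ Y P, hsum1]
  have hconv : ∑ v, w v * ∑ i ∈ Sv v, (Real.negMulLog (p i) + Real.negMulLog (1 - p i))
      = ∑ e, P e * ∑ i ∈ Cov e, (Real.negMulLog (p i) + Real.negMulLog (1 - p i)) := by
    have step : ∀ v, w v * ∑ i ∈ Sv v, (Real.negMulLog (p i) + Real.negMulLog (1 - p i))
        = ∑ e ∈ univ.filter (fun e => Y e = v),
            P e * ∑ i ∈ Cov e, (Real.negMulLog (p i) + Real.negMulLog (1 - p i)) := by
      intro v
      simp only [hwdef]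
      rw [Finset.sum_mul]
      refine Finset.sum_congr rfl fun e he => ?_
      have hYe : Y e = v := (Finset.mem_filter.mp he).2
      rw [← hYe, hSv e]
    simp_rw [step]
    exact Finset.sum_fiberwise univ Y
      fun e => P e * ∑ i ∈ Cov e, (Real.negMulLog (p i) + Real.negMulLog (1 - p i))
  have hEnt : ∀ v, w v * pmfEntropy (fun ω => if Y ω = v then P ω / w v else 0) id
      = w v * ((∑ i, (Real.negMulLog (p i) + Real.negMulLog (1 - p i)))
          - ∑ i ∈ Sv v, (Real.negMulLog (p i) + Real.negMulLog (1 - p i))) := by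
    intro v
    by_cases hw : w v = 0
    · rw [hw, zero_mul, zero_mul]
    congr 1
    obtain ⟨e₀, he₀mem, he₀⟩ :
        ∃ e₀ ∈ univ.filter (fun ω => Y ω = v), P e₀ ≠ 0 := by
      refine Finset.exists_ne_zero_of_sum_ne_zero ?_
      simpa only [hwdef] using hw
    have hYe₀ : Y e₀ = v := (Finset.mem_filter.mp he₀mem).2
    have hSvv : Sv v = Cov e₀ := by rw [← hYe₀, hSv e₀]
    have hfib : ∀ e, Y e = v ↔ ∀ i ∈ Cov e₀, e i = e₀ i := by
      intro e
      constructor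
      · intro hYe i hi
        have h1 : Y e i = Y e₀ i := by rw [hYe, hYe₀]
        rw [hY e i, hY e₀ i, if_pos hi] at h1
        by_cases hie : i ∈ Cov e
        · rw [if_pos hie] at h1; exact Option.some.inj h1
        · rw [if_neg hie] at h1; exact absurd h1 (by simp)
      · intro hag
        have hcov : Cov e = Cov e₀ := hCons e e₀ hag
        rw [← hYe₀]
        funext i
        rw [hY e i, hY e₀ i, hcov]
        by_cases hi : i ∈ Cov e₀
        · rw [if_pos hi, if_pos hi, hag i hi]
        · rw [if_neg hi, if_neg hi]
    set d : Fin m → Bool → ℝ :=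
      fun i x => if i ∈ Cov e₀ then (if x = e₀ i then q i x else 0) else q i x with hd
    have hwEq : w v = ∏ i ∈ Cov e₀, q i (e₀ i) := by
      have step : ∀ e, (if Y e = v then P e else 0) = ∏ i, d i (e i) := by
        intro e
        by_cases hag : ∀ i ∈ Cov e₀, e i = e₀ i
        · rw [if_pos ((hfib e).mpr hag), hPq e]
          refine Finset.prod_congr rfl fun i _ => ?_
          by_cases hi : i ∈ Cov e₀
          · simp [hd, hi, hag i hi]
          · simp [hd, hi]
        · rw [if_neg (fun hYe => hag ((hfib e).mp hYe))]
          push_neg at hag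
          obtain ⟨i, hi, hne⟩ := hag
          refine (Finset.prod_eq_zero (Finset.mem_univ i) ?_).symm
          simp [hd, hi, hne]
      calc w v = ∑ e, if Y e = v then P e else 0 := by
              simp only [hwdef]; rw [Finset.sum_filter]
        _ = ∑ e : Fin m → Bool, ∏ i, d i (e i) := by simp_rw [step]
        _ = ∏ i, (d i true + d i false) := sumProdAux d
        _ = ∏ i ∈ Cov e₀, q i (e₀ i) := by
              rw [← Finset.prod_subset (Finset.subset_univ (Cov e₀))
                (fun i _ hi => by simp [hd, hi, hq1 i])]
              refine Finset.prod_congr rfl fun i hi => ?_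
              cases hb : e₀ i <;> simp [hd, hi, hb]
    have hw' : (∏ i ∈ Cov e₀, q i (e₀ i)) ≠ 0 := hwEq ▸ hw
    set aC : Fin m → Bool → ℝ :=
      fun i x => if i ∈ Cov e₀ then (if x = e₀ i then 1 else 0) else q i x with ha
    have haq1 : ∀ i, aC i true + aC i false = 1 := by
      intro i
      by_cases hi : i ∈ Cov e₀
      · cases hb : e₀ i <;> simp [ha, hi, hb]
      · simpa [ha, hi] using hq1 i
    have hcond : ∀ e, (if Y e = v then P e / w v else 0) = ∏ i, aC i (e i) := by
      intro e
      by_cases hag : ∀ i ∈ Cov e₀, e i = e₀ i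
      · rw [if_pos ((hfib e).mpr hag), hPq e, hwEq,
            ← Finset.prod_mul_prod_compl (Cov e₀) (fun i => q i (e i))]
        have h1 : ∏ i ∈ Cov e₀, q i (e i) = ∏ i ∈ Cov e₀, q i (e₀ i) :=
          Finset.prod_congr rfl fun i hi => by rw [hag i hi]
        rw [h1, mul_div_cancel_left₀ _ hw',
            ← Finset.prod_mul_prod_compl (Cov e₀) (fun i => aC i (e i))]
        have h2 : ∏ i ∈ Cov e₀, aC i (e i) = 1 :=
          Finset.prod_eq_one fun i hi => by simp [ha, hi, hag i hi]
        rw [h2, one_mul]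
        exact Finset.prod_congr rfl fun i hi => by simp [ha, Finset.mem_compl.mp hi]
      · rw [if_neg (fun hYe => hag ((hfib e).mp hYe))]
        push_neg at hag
        obtain ⟨i, hi, hne⟩ := hag
        refine (Finset.prod_eq_zero (Finset.mem_univ i) ?_).symm
        simp [ha, hi, hne]
    rw [pmfEntropy_id]
    simp_rw [hcond]
    rw [sumNegMulLogProd aC haq1]
    have hterm : ∀ i, Real.negMulLog (aC i true) + Real.negMulLog (aC i false)
        = if i ∈ Cov e₀ then 0
          else Real.negMulLog (p i) + Real.negMulLog (1 - p i) := by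
      intro i
      by_cases hi : i ∈ Cov e₀
      · cases hb : e₀ i <;> simp [ha, hi, hb]
      · simp [ha, hi, hqt, hqf]
    simp_rw [hterm]
    rw [Finset.sum_ite, Finset.sum_const_zero, zero_add, hSvv]
    have hcompl : univ.filter (fun i => ¬ i ∈ Cov e₀) = (Cov e₀)ᶜ := by
      ext i; simp
    rw [hcompl, eq_sub_iff_add_eq, Finset.sum_compl_add_sum]
  have hrw : ∑ v, w v * pmfEntropy (fun ω => if Y ω = v then P ω / w v else 0) id
      = ∑ v, w v * ((∑ i, (Real.negMulLog (p i) + Real.negMulLog (1 - p i)))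
          - ∑ i ∈ Sv v, (Real.negMulLog (p i) + Real.negMulLog (1 - p i))) :=
    Finset.sum_congr rfl fun v _ => hEnt v
  rw [hrw]
  simp_rw [mul_sub]
  rw [Finset.sum_sub_distrib, ← Finset.sum_mul, hsumw, one_mul, hconv]
  ring
end

section
/- Noiseless mutual information with independent cells is submodular and 3-increasing in the set of actions: the function X ↦ I(E; Y(X)) defined as in the noiseless, independent-cell observation model equals an expected weighted coverage function with weights H(c_i) ≥ 0, and therefore is normalized, monotone, submodular, and 3-increasing. -/
open Finset

/-- The third-order discrete difference of a set function `f` at `A` in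
directions `x, y, z`. -/
def thirdDiff {U : Type*} [DecidableEq U] (f : Finset U → ℝ) (x y z : U)
    (A : Finset U) : ℝ :=
  f (insert x (insert y (insert z A))) - f (insert x (insert y A))
    - f (insert x (insert z A)) - f (insert y (insert z A))
    + f (insert x A) + f (insert y A) + f (insert z A) - f A

def covSum {U C : Type*} [DecidableEq U] [DecidableEq C]
    (f : U → Finset C) (w : C → ℝ) (X : Finset U) : ℝ :=
  ∑ i ∈ X.biUnion f, w i

lemma covSum_marg {U C : Type*} [DecidableEq U] [DecidableEq C]
    (f : U → Finset C) (w : C → ℝ) (x : U) (A : Finset U) :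
    covSum f w (insert x A) = covSum f w A + ∑ i ∈ f x \ A.biUnion f, w i := by
  unfold covSum
  rw [biUnion_insert, ← sdiff_union_self_eq_union, sum_union sdiff_disjoint]
  ring

lemma covSum_mono {U C : Type*} [DecidableEq U] [DecidableEq C]
    (f : U → Finset C) (w : C → ℝ) (hw : ∀ i, 0 ≤ w i)
    {X Y : Finset U} (h : X ⊆ Y) : covSum f w X ≤ covSum f w Y :=
  sum_le_sum_of_subset_of_nonneg (biUnion_subset_biUnion_of_subset_left f h)
    (fun i _ _ => hw i)

lemma covSum_submod {U C : Type*} [DecidableEq U] [DecidableEq C]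
    (f : U → Finset C) (w : C → ℝ) (hw : ∀ i, 0 ≤ w i)
    {A B : Finset U} (x : U) (h : A ⊆ B) :
    covSum f w (insert x B) - covSum f w B ≤
      covSum f w (insert x A) - covSum f w A := by
  rw [covSum_marg, covSum_marg]
  simp only [add_sub_cancel_left]
  exact sum_le_sum_of_subset_of_nonneg
    (sdiff_subset_sdiff (Finset.Subset.refl _) (biUnion_subset_biUnion_of_subset_left f h))
    (fun i _ _ => hw i)

lemma covSum_three {U C : Type*} [DecidableEq U] [DecidableEq C]
    (f : U → Finset C) (w : C → ℝ) (hw : ∀ i, 0 ≤ w i)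
    (x y z : U) (A : Finset U) :
    0 ≤ thirdDiff (covSum f w) x y z A := by
  unfold thirdDiff
  rw [covSum_marg f w x (insert y (insert z A)), covSum_marg f w x (insert y A),
    covSum_marg f w x (insert z A), covSum_marg f w x A]
  set T1 := f x \ (insert y (insert z A)).biUnion f with hT1def
  set T2 := f x \ (insert y A).biUnion f with hT2def
  set T3 := f x \ (insert z A).biUnion f with hT3def
  set T4 := f x \ A.biUnion f with hT4def
  have hinter : T2 ∩ T3 = T1 := by
    ext a
    simp only [hT1def, hT2def, hT3def, mem_inter, mem_sdiff, biUnion_insert, mem_union]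
    tauto
  have hsub : T2 ∪ T3 ⊆ T4 := by
    intro a
    simp only [hT2def, hT3def, hT4def, mem_union, mem_sdiff, biUnion_insert]
    tauto
  have h1 : ∑ i ∈ T2 ∪ T3, w i + ∑ i ∈ T2 ∩ T3, w i = ∑ i ∈ T2, w i + ∑ i ∈ T3, w i :=
    Finset.sum_union_inter
  have h2 : ∑ i ∈ T2 ∪ T3, w i ≤ ∑ i ∈ T4, w i :=
    sum_le_sum_of_subset_of_nonneg hsub (fun i _ _ => hw i)
  rw [hinter] at h1
  linarith

/-- Noiseless mutual information with independent cells, which equals the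
expected coverage weighted by the (nonnegative) cell entropies
`H(c_i) = negMulLog(p_i) + negMulLog(1 − p_i)`, is normalized, monotone,
submodular, and 3-increasing as a function of the action set. -/
theorem noiseless_MI_submodular_three_increasing
    {U C E : Type*} [DecidableEq U] [DecidableEq C] [Fintype E]
    (penv : E → ℝ) (hpenv : ∀ e, 0 ≤ penv e) (hpsum : ∑ e, penv e = 1)
    (F : U → E → Finset C)
    (p : C → ℝ) (hp0 : ∀ i, 0 ≤ p i) (hp1 : ∀ i, p i ≤ 1)
    (g : Finset U → ℝ)
    (hg : ∀ X : Finset U, g X = ∑ e, penv e *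
      ∑ i ∈ X.biUnion (fun x => F x e),
        (Real.negMulLog (p i) + Real.negMulLog (1 - p i))) :
    g ∅ = 0 ∧
    (∀ X Y : Finset U, X ⊆ Y → g X ≤ g Y) ∧
    (∀ (A B : Finset U) (x : U), A ⊆ B → x ∉ B →
      g (insert x B) - g B ≤ g (insert x A) - g A) ∧
    (∀ (x y z : U) (A : Finset U),
      x ≠ y → x ≠ z → y ≠ z → x ∉ A → y ∉ A → z ∉ A →
      0 ≤ thirdDiff g x y z A) := by
  set w : C → ℝ := fun i => Real.negMulLog (p i) + Real.negMulLog (1 - p i) with hw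
  have hwnn : ∀ i, 0 ≤ w i := fun i =>
    add_nonneg (Real.negMulLog_nonneg (hp0 i) (hp1 i))
      (Real.negMulLog_nonneg (by linarith [hp1 i]) (by linarith [hp0 i]))
  have hg' : ∀ X : Finset U, g X = ∑ e, penv e * covSum (fun x => F x e) w X := by
    intro X; rw [hg X]; rfl
  refine ⟨?_, ?_, ?_, ?_⟩
  · simp [hg']
    unfold covSum
    simp
  · intro X Y hXY
    rw [hg' X, hg' Y]
    exact Finset.sum_le_sum fun e _ =>
      mul_le_mul_of_nonneg_left (covSum_mono _ w hwnn hXY) (hpenv e)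
  · intro A B x hAB _
    simp only [hg', ← Finset.sum_sub_distrib, ← mul_sub]
    exact Finset.sum_le_sum fun e _ =>
      mul_le_mul_of_nonneg_left (covSum_submod _ w hwnn x hAB) (hpenv e)
  · intro x y z A _ _ _ _ _ _
    have : thirdDiff g x y z A =
        ∑ e, penv e * thirdDiff (covSum (fun x => F x e) w) x y z A := by
      unfold thirdDiff
      simp only [hg', ← Finset.sum_sub_distrib, ← Finset.sum_add_distrib,
        ← mul_sub, ← mul_add]
    rw [this]
    exact Finset.sum_nonneg fun e _ =>
      mul_nonneg (hpenv e) (covSum_three _ w hwnn x y z A)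
end
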